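/- arXiv:2403.11986 — 4 statements merged into one kernel-verified Lean document; each statement's English description precedes it below -/
import Mathlib

section
/- The Henneberg 0-extension move preserves (3,6)-tightness: if G is a (3,6)-tight finite graph and G' is obtained from G by adding a new vertex v of degree 3 adjacent to three distinct vertices of G, then G' is (3,6)-tight. -/
/-!
Deleting the new vertex `v` from a subgraph `H` of `G'` removes one vertex and at most the three
new edges, so the Maxwell count of `H` is at least that of `H - v`. Hence either `H - v` still has
three vertices and inherits the bound from `G`, or `H` has exactly three vertices and hence at
most three edges. The count of `G'` itself is that of `G`, plus `3` for `v`, minus `3` for its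
edges.
-/

/-- A finite simple graph given by a vertex set and an edge set of unordered pairs. -/
structure FinGraph (α : Type*) [DecidableEq α] where
  verts : Finset α
  edges : Finset (Sym2 α)
  edge_mem : ∀ e ∈ edges, ∀ x ∈ e, x ∈ verts
  not_diag : ∀ e ∈ edges, ¬ e.IsDiag

namespace FinGraph

variable {α : Type*} [DecidableEq α]

/-- The Maxwell count `f(G) = 3|V| - |E|`. -/
def maxwell (G : FinGraph α) : ℤ := 3 * G.verts.card - G.edges.card

/-- `H` is a subgraph of `G`. -/
def IsSubgraph (H G : FinGraph α) : Prop := H.verts ⊆ G.verts ∧ H.edges ⊆ G.edges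

/-- `G` is (3,6)-sparse. -/
def Sparse (G : FinGraph α) : Prop :=
  ∀ H : FinGraph α, H.IsSubgraph G → 3 ≤ H.verts.card → 6 ≤ H.maxwell

/-- `G` is (3,6)-tight. -/
def Tight (G : FinGraph α) : Prop := Sparse G ∧ G.maxwell = 6

end FinGraph

namespace FinGraph

variable {α : Type*} [DecidableEq α] {G H K : FinGraph α} {v : α}

def edgesAt (G : FinGraph α) (v : α) : Finset (Sym2 α) := G.edges.filter (v ∈ ·)

def deleteVert (G : FinGraph α) (v : α) : FinGraph α where
  verts := G.verts.erase v
  edges := G.edges.filter (v ∉ ·)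
  edge_mem e he x hx := by
    rw [Finset.mem_filter] at he
    exact Finset.mem_erase.2 ⟨fun hxv => he.2 (hxv ▸ hx), G.edge_mem e he.1 x hx⟩
  not_diag e he := G.not_diag e (Finset.mem_filter.1 he).1

theorem IsSubgraph.trans (hHG : H.IsSubgraph G) (hKH : K.IsSubgraph H) : K.IsSubgraph G :=
  ⟨hKH.1.trans hHG.1, hKH.2.trans hHG.2⟩

theorem Sparse.mono (hG : G.Sparse) (hHG : H.IsSubgraph G) : H.Sparse :=
  fun K hKH => hG K (hHG.trans hKH)

theorem IsSubgraph.edgesAt_subset (hHG : H.IsSubgraph G) : H.edgesAt v ⊆ G.edgesAt v :=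
  Finset.filter_subset_filter _ hHG.2

theorem IsSubgraph.deleteVert (hHG : H.IsSubgraph G) :
    (H.deleteVert v).IsSubgraph (G.deleteVert v) :=
  ⟨Finset.erase_subset_erase _ hHG.1, Finset.filter_subset_filter _ hHG.2⟩

theorem IsSubgraph.deleteVert_of_notMem (hHG : H.IsSubgraph G) (hv : v ∉ H.verts) :
    H.IsSubgraph (G.deleteVert v) :=
  ⟨fun _ hx => Finset.mem_erase.2 ⟨fun hxv => hv (hxv ▸ hx), hHG.1 hx⟩,
    fun e he => Finset.mem_filter.2 ⟨hHG.2 he, fun hve => hv (H.edge_mem e he v hve)⟩⟩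

theorem card_edges_le_choose_two (G : FinGraph α) : G.edges.card ≤ G.verts.card.choose 2 := by
  rw [← Sym2.card_image_offDiag]
  refine Finset.card_le_card fun e he => ?_
  induction e using Sym2.ind with
  | h x y =>
    refine Finset.mem_image.2 ⟨(x, y), Finset.mem_offDiag.2 ⟨?_, ?_, ?_⟩, rfl⟩
    · exact G.edge_mem _ he x (Sym2.mem_mk_left x y)
    · exact G.edge_mem _ he y (Sym2.mem_mk_right x y)
    · exact fun hxy => G.not_diag _ he (Sym2.mk_isDiag_iff.2 hxy)

theorem six_le_maxwell_of_card_verts_eq_three (h : G.verts.card = 3) : 6 ≤ G.maxwell := by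
  have hE : (G.edges.card : ℤ) ≤ 3 := by
    have := G.card_edges_le_choose_two
    rw [h] at this
    exact_mod_cast this
  unfold maxwell
  rw [h]
  push_cast
  linarith

theorem maxwell_eq_deleteVert (hv : v ∈ G.verts) :
    G.maxwell = (G.deleteVert v).maxwell + 3 - (G.edgesAt v).card := by
  have hV : (G.deleteVert v).verts.card + 1 = G.verts.card :=
    Finset.card_erase_add_one hv
  have hE : (G.edgesAt v).card + (G.deleteVert v).edges.card = G.edges.card :=
    Finset.card_filter_add_card_filter_not _
  unfold maxwell
  rw [← hV, ← hE]
  push_cast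
  ring

theorem Sparse.of_deleteVert (hG : (G.deleteVert v).Sparse) (hdeg : (G.edgesAt v).card ≤ 3) :
    G.Sparse := by
  intro H hHG hH3
  by_cases hvH : v ∈ H.verts
  · obtain hH3 | hH4 := hH3.eq_or_lt
    · exact six_le_maxwell_of_card_verts_eq_three hH3.symm
    have hHv : 3 ≤ (H.deleteVert v).verts.card := by
      have := Finset.card_erase_add_one hvH
      change 3 ≤ (H.verts.erase v).card
      omega
    have hdegH : ((H.edgesAt v).card : ℤ) ≤ 3 := by
      exact_mod_cast (Finset.card_le_card hHG.edgesAt_subset).trans hdeg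
    have hHv6 := hG _ hHG.deleteVert hHv
    rw [maxwell_eq_deleteVert hvH]
    linarith
  · exact hG H (hHG.deleteVert_of_notMem hvH) hH3

end FinGraph

open FinGraph in
theorem henneberg_preserves_tight_general {α : Type*} [DecidableEq α]
    (G G' : FinGraph α) (v w₁ w₂ w₃ : α)
    (hG : G.Tight)
    (hv : v ∉ G.verts)
    (h12 : w₁ ≠ w₂) (h13 : w₁ ≠ w₃) (h23 : w₂ ≠ w₃)
    (hverts : G'.verts = insert v G.verts)
    (hedges : G'.edges = G.edges ∪ {s(v, w₁), s(v, w₂), s(v, w₃)}) :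
    G'.Tight := by
  have hvG : ∀ e ∈ G.edges, v ∉ e := fun e he hve => hv (G.edge_mem e he v hve)
  have hnew : ∀ e ∈ ({s(v, w₁), s(v, w₂), s(v, w₃)} : Finset (Sym2 α)), v ∈ e := by
    simp
  have hdel_verts : (G'.deleteVert v).verts = G.verts := by
    simp only [deleteVert, hverts, Finset.erase_insert hv]
  have hdel_edges : (G'.deleteVert v).edges = G.edges := by
    simp only [deleteVert, hedges, Finset.filter_union, Finset.filter_true_of_mem hvG,
      Finset.filter_false_of_mem fun e he => not_not.2 (hnew e he), Finset.union_empty]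
  have hat : G'.edgesAt v = {s(v, w₁), s(v, w₂), s(v, w₃)} := by
    simp only [edgesAt, hedges, Finset.filter_union, Finset.filter_false_of_mem hvG,
      Finset.filter_true_of_mem hnew, Finset.empty_union]
  have hdeg : (G'.edgesAt v).card = 3 := by
    rw [hat]
    exact Finset.card_eq_three.2 ⟨_, _, _, mt Sym2.congr_right.1 h12,
      mt Sym2.congr_right.1 h13, mt Sym2.congr_right.1 h23, rfl⟩
  have hdel_maxwell : (G'.deleteVert v).maxwell = G.maxwell := by
    simp only [maxwell, hdel_verts, hdel_edges]
  refine ⟨Sparse.of_deleteVert (hG.1.mono ⟨hdel_verts.le, hdel_edges.le⟩) hdeg.le, ?_⟩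
  rw [maxwell_eq_deleteVert (hverts ▸ Finset.mem_insert_self v G.verts), hdel_maxwell, hdeg,
    hG.2]
  norm_num

/-- the Henneberg 0-extension move preserves (3,6)-tightness. -/
theorem henneberg_preserves_tight {α : Type*} [DecidableEq α]
    (G G' : FinGraph α) (v w₁ w₂ w₃ : α)
    (hG : G.Tight)
    (hv : v ∉ G.verts)
    (hw₁ : w₁ ∈ G.verts) (hw₂ : w₂ ∈ G.verts) (hw₃ : w₃ ∈ G.verts)
    (h12 : w₁ ≠ w₂) (h13 : w₁ ≠ w₃) (h23 : w₂ ≠ w₃)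
    (hverts : G'.verts = insert v G.verts)
    (hedges : G'.edges = G.edges ∪ {s(v, w₁), s(v, w₂), s(v, w₃)}) :
    G'.Tight :=
  henneberg_preserves_tight_general G G' v w₁ w₂ w₃ hG hv h12 h13 h23 hverts hedges
end

section
/- For every integer r ≥ 3, the discus graph D_r is (3,6)-tight, where D_r is the graph obtained from an r-cycle by adding two new vertices each joined by an edge to all r cycle vertices. -/
/-!
Let `H` be a subgraph of `D_r` with `k` cycle vertices, `t` cycle edges and `a ≤ 2` hubs. Each hub
of `H` carries at most `k` spokes, so `3|V(H)| - |E(H)| ≥ 3(k + a) - t - ak`. Always `t ≤ k`, and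
`t < k` when `0 < k < r`, because a proper nonempty subset of a cycle contains a vertex whose
successor lies outside it. With `|V(H)| ≥ 3` and `r ≥ 3` this gives the bound `6` in each of the
cases `a = 0, 1, 2`; for `H = D_r` the count is exactly `3(r + 2) - 3r = 6`.
-/

open Finset

theorem Nat.add_two_mod_ne {r j : ℕ} (hr : 3 ≤ r) (hj : j < r) : (j + 2) % r ≠ j := by
  intro h
  have hmod : j ≡ j + 2 [MOD r] := by rw [Nat.ModEq, h, Nat.mod_eq_of_lt hj]
  have hdvd : r ∣ 2 := by simpa using (Nat.modEq_iff_dvd' (by omega)).mp hmod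
  have := Nat.le_of_dvd two_pos hdvd
  omega

theorem exists_succ_mod_boundary {r : ℕ} {P : ℕ → Prop} (hP : ∃ i < r, P i)
    (hnP : ∃ j < r, ¬ P j) : ∃ i < r, P i ∧ ¬ P ((i + 1) % r) := by
  by_contra! hclosed
  obtain ⟨i₀, hi₀, hPi₀⟩ := hP
  obtain ⟨j, hj, hPj⟩ := hnP
  have hall : ∀ m, P ((i₀ + m) % r) := by
    intro m
    induction m with
    | zero => simpa [Nat.mod_eq_of_lt hi₀] using hPi₀
    | succ m ih =>
      rw [← Nat.add_assoc, ← Nat.mod_add_mod]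
      exact hclosed _ (Nat.mod_lt _ (by omega)) ih
  have hPj' := hall (r - i₀ + j)
  rw [show i₀ + (r - i₀ + j) = j + r by omega, Nat.add_mod_right, Nat.mod_eq_of_lt hj] at hPj'
  exact hPj hPj'

theorem card_filter_succ_mod_lt {r : ℕ} (P : ℕ → Prop) [DecidablePred P]
    (hpos : 0 < #{i ∈ range r | P i}) (hlt : #{i ∈ range r | P i} < r) :
    #{i ∈ range r | P i ∧ P ((i + 1) % r)} < #{i ∈ range r | P i} := by
  have hP : ∃ i < r, P i := by
    obtain ⟨i, hi⟩ := card_pos.mp hpos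
    exact ⟨i, by simpa using hi⟩
  have hnP : ∃ j < r, ¬ P j := by
    by_contra! h
    rw [filter_true_of_mem (by simpa using h), card_range] at hlt
    exact lt_irrefl _ hlt
  obtain ⟨i, hi, hPi, hPi'⟩ := exists_succ_mod_boundary hP hnP
  rw [← filter_filter]
  exact card_lt_card (filter_ssubset.mpr ⟨i, by simp [hi, hPi], hPi'⟩)

theorem Finset.card_insert_inter_of_notMem {α : Type*} [DecidableEq α] {a : α} {s t : Finset α}
    (ha : a ∉ s) : #(insert a s ∩ t) = #(s ∩ t) + if a ∈ t then 1 else 0 := by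
  split_ifs with h
  · rw [insert_inter_of_mem h, card_insert_of_notMem fun h' => ha (mem_of_mem_inter_left h')]
  · rw [insert_inter_of_notMem h, add_zero]

namespace FinGraph

variable {α : Type*} [DecidableEq α]

theorem IsSubgraph.edges_subset_filter_sym2 {H G : FinGraph α} (h : H.IsSubgraph G) :
    H.edges ⊆ G.edges.filter (· ∈ H.verts.sym2) :=
  fun e he => mem_filter.mpr ⟨h.2 he, mem_sym2_iff.mpr (H.edge_mem e he)⟩

end FinGraph

namespace Discus

variable {α : Type*} [DecidableEq α] {r : ℕ} {c : ℕ → α} {u w : α}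

def cycleEdges (r : ℕ) (c : ℕ → α) : Finset (Sym2 α) :=
  (range r).image fun i => s(c i, c ((i + 1) % r))

def spokes (r : ℕ) (c : ℕ → α) (u : α) : Finset (Sym2 α) :=
  (range r).image fun i => s(u, c i)

def verts (r : ℕ) (c : ℕ → α) (u w : α) : Finset α :=
  insert u (insert w ((range r).image c))

def edges (r : ℕ) (c : ℕ → α) (u w : α) : Finset (Sym2 α) :=
  cycleEdges r c ∪ spokes r c u ∪ spokes r c w

theorem card_cycleEdges (hr : 3 ≤ r) (hc : Set.InjOn c (Set.Iio r)) : #(cycleEdges r c) = r := by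
  rw [← coe_range] at hc
  rw [cycleEdges, card_image_of_injOn, card_range]
  intro i hi j hj hij
  have hmod : ∀ n, n % r ∈ (range r : Set ℕ) := fun n => mem_range.mpr (Nat.mod_lt _ (by omega))
  rcases Sym2.eq_iff.mp hij with ⟨h, -⟩ | ⟨h₁, h₂⟩
  · exact hc hi hj h
  · have hi' : i = (j + 1) % r := hc hi (hmod _) h₁
    have hj' : (i + 1) % r = j := hc (hmod _) hj h₂
    rw [hi', Nat.mod_add_mod] at hj'
    exact absurd hj' (Nat.add_two_mod_ne hr (mem_range.mp hj))

theorem card_spokes (hc : Set.InjOn c (Set.Iio r)) : #(spokes r c u) = r := by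
  rw [← coe_range] at hc
  rw [spokes, card_image_of_injOn, card_range]
  exact fun i hi j hj h => hc hi hj (Sym2.congr_right.mp h)

theorem mem_of_mem_spokes {e : Sym2 α} (he : e ∈ spokes r c u) : u ∈ e := by
  obtain ⟨i, -, rfl⟩ := mem_image.mp he
  exact Sym2.mem_mk_left _ _

theorem notMem_of_mem_cycleEdges (hu : ∀ i < r, u ≠ c i) {e : Sym2 α} (he : e ∈ cycleEdges r c) :
    u ∉ e := by
  obtain ⟨i, hi, rfl⟩ := mem_image.mp he
  rw [mem_range] at hi
  rw [Sym2.mem_iff]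
  rintro (h | h)
  exacts [hu i hi h, hu _ (Nat.mod_lt _ (by omega)) h]

theorem notMem_of_mem_spokes (hu : ∀ i < r, u ≠ c i) (huw : u ≠ w) {e : Sym2 α}
    (he : e ∈ spokes r c w) : u ∉ e := by
  obtain ⟨i, hi, rfl⟩ := mem_image.mp he
  rw [Sym2.mem_iff]
  rintro (h | h)
  exacts [huw h, hu i (mem_range.mp hi) h]

theorem card_edges (hr : 3 ≤ r) (hc : Set.InjOn c (Set.Iio r)) (hu : ∀ i < r, u ≠ c i)
    (hw : ∀ i < r, w ≠ c i) (huw : u ≠ w) : #(edges r c u w) = 3 * r := by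
  have hdisj : Disjoint (cycleEdges r c ∪ spokes r c u) (spokes r c w) :=
    disjoint_left.mpr fun e he hew => by
      rcases mem_union.mp he with he | he
      · exact notMem_of_mem_cycleEdges hw he (mem_of_mem_spokes hew)
      · exact notMem_of_mem_spokes hu huw hew (mem_of_mem_spokes he)
  have hdisj' : Disjoint (cycleEdges r c) (spokes r c u) :=
    disjoint_left.mpr fun e he heu => notMem_of_mem_cycleEdges hu he (mem_of_mem_spokes heu)
  rw [edges, card_union_of_disjoint hdisj, card_union_of_disjoint hdisj',
    card_cycleEdges hr hc, card_spokes hc, card_spokes hc]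
  ring

theorem card_of_subset_verts (hc : Set.InjOn c (Set.Iio r)) (hu : ∀ i < r, u ≠ c i)
    (hw : ∀ i < r, w ≠ c i) (huw : u ≠ w) {V : Finset α} (hV : V ⊆ verts r c u w) :
    #V = #{i ∈ range r | c i ∈ V} + (if u ∈ V then 1 else 0) + (if w ∈ V then 1 else 0) := by
  have hwc : w ∉ (range r).image c := by simpa using fun i hi => (hw i hi).symm
  have huc : u ∉ insert w ((range r).image c) := by
    simpa [huw] using fun i hi => (hu i hi).symm
  calc #V = #(verts r c u w ∩ V) := by rw [inter_eq_right.mpr hV]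
    _ = #((range r).image c ∩ V) + (if u ∈ V then 1 else 0) + (if w ∈ V then 1 else 0) := by
      rw [verts, card_insert_inter_of_notMem huc, card_insert_inter_of_notMem hwc]
      ring
    _ = _ := by
      rw [← filter_mem_eq_inter, filter_image,
        card_image_of_injOn (hc.mono fun i hi => by simpa using (mem_filter.mp hi).1)]

theorem card_verts (hc : Set.InjOn c (Set.Iio r)) (hu : ∀ i < r, u ≠ c i)
    (hw : ∀ i < r, w ≠ c i) (huw : u ≠ w) : #(verts r c u w) = r + 2 := by
  rw [card_of_subset_verts hc hu hw huw subset_rfl, filter_true_of_mem, card_range]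
  · simp [verts]
  · exact fun i hi => mem_insert_of_mem (mem_insert_of_mem (mem_image_of_mem c hi))

theorem card_filter_sym2_cycleEdges_le (V : Finset α) :
    #{e ∈ cycleEdges r c | e ∈ V.sym2} ≤ #{i ∈ range r | c i ∈ V ∧ c ((i + 1) % r) ∈ V} := by
  rw [cycleEdges, filter_image]
  simpa only [mk_mem_sym2_iff] using card_image_le

theorem card_filter_sym2_spokes_le (V : Finset α) :
    #{e ∈ spokes r c u | e ∈ V.sym2} ≤ if u ∈ V then #{i ∈ range r | c i ∈ V} else 0 := by
  rw [spokes, filter_image]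
  refine card_image_le.trans ?_
  split_ifs with hu <;> simp [hu]

theorem card_filter_sym2_edges_le (V : Finset α) :
    #{e ∈ edges r c u w | e ∈ V.sym2} ≤ #{i ∈ range r | c i ∈ V ∧ c ((i + 1) % r) ∈ V} +
      (if u ∈ V then #{i ∈ range r | c i ∈ V} else 0) +
      (if w ∈ V then #{i ∈ range r | c i ∈ V} else 0) := by
  rw [edges, filter_union, filter_union]
  refine (card_union_le _ _).trans (add_le_add ((card_union_le _ _).trans ?_) ?_)
  · exact add_le_add (card_filter_sym2_cycleEdges_le V) (card_filter_sym2_spokes_le V)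
  · exact card_filter_sym2_spokes_le V

variable {D : FinGraph α}

theorem sparse (hr : 3 ≤ r) (hc : Set.InjOn c (Set.Iio r)) (hu : ∀ i < r, u ≠ c i)
    (hw : ∀ i < r, w ≠ c i) (huw : u ≠ w) (hverts : D.verts = verts r c u w)
    (hedges : D.edges = edges r c u w) : D.Sparse := by
  intro H hH hcard
  set k := #{i ∈ range r | c i ∈ H.verts}
  set t := #{i ∈ range r | c i ∈ H.verts ∧ c ((i + 1) % r) ∈ H.verts}
  have hV : #H.verts = k + (if u ∈ H.verts then 1 else 0) + (if w ∈ H.verts then 1 else 0) :=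
    card_of_subset_verts hc hu hw huw (hverts ▸ hH.1)
  have hE : #H.edges ≤ t + (if u ∈ H.verts then k else 0) + (if w ∈ H.verts then k else 0) :=
    (card_le_card hH.edges_subset_filter_sym2).trans (hedges ▸ card_filter_sym2_edges_le H.verts)
  have htk : t ≤ k := card_le_card (monotone_filter_right _ fun _ _ h => h.1)
  have htk' : 0 < k → k < r → t < k := card_filter_succ_mod_lt (c · ∈ H.verts)
  rw [FinGraph.maxwell]
  split_ifs at hV hE <;> omega

theorem maxwell_eq_six (hr : 3 ≤ r) (hc : Set.InjOn c (Set.Iio r)) (hu : ∀ i < r, u ≠ c i)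
    (hw : ∀ i < r, w ≠ c i) (huw : u ≠ w) (hverts : D.verts = verts r c u w)
    (hedges : D.edges = edges r c u w) : D.maxwell = 6 := by
  rw [FinGraph.maxwell, hverts, hedges, card_verts hc hu hw huw, card_edges hr hc hu hw huw]
  push_cast
  ring

end Discus

/-- for every r ≥ 3 the discus graph D_r (an r-cycle plus two hub
vertices u, w joined to every cycle vertex, with u, w nonadjacent) is (3,6)-tight. -/
theorem discus_tight {α : Type*} [DecidableEq α]
    (r : ℕ) (hr : 3 ≤ r) (D : FinGraph α) (c : ℕ → α) (u w : α)
    (hc : Set.InjOn c (Set.Iio r))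
    (hu : ∀ i < r, u ≠ c i) (hw : ∀ i < r, w ≠ c i) (huw : u ≠ w)
    (hverts : D.verts = insert u (insert w ((Finset.range r).image c)))
    (hedges : D.edges =
      (Finset.range r).image (fun i => s(c i, c ((i + 1) % r)))
      ∪ (Finset.range r).image (fun i => s(u, c i))
      ∪ (Finset.range r).image (fun i => s(w, c i))) :
    D.Tight :=
  ⟨Discus.sparse hr hc hu hw huw hverts hedges, Discus.maxwell_eq_six hr hc hu hw huw hverts hedges⟩
end

section
/- If G is a (3,6)-tight graph and H is a graph containing a cycle a such that the glued graph G ∪_{d=a} H is (3,6)-tight (where d is a cycle of G identified with a, and G ∩ H is exactly this cycle), then for every subgraph L of H with at least 3 vertices, f(L) - f(L ∩ d) ≥ 6 - f(d), where f(K) = 3|V(K)| - |E(K)|. -/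
namespace FinGraph

variable {α : Type*} [DecidableEq α]

/-- Vertex-wise and edge-wise union of two graphs. -/
def union (G H : FinGraph α) : FinGraph α where
  verts := G.verts ∪ H.verts
  edges := G.edges ∪ H.edges
  edge_mem := by
    intro e he x hx
    rcases Finset.mem_union.mp he with h | h
    · exact Finset.mem_union_left _ (G.edge_mem e h x hx)
    · exact Finset.mem_union_right _ (H.edge_mem e h x hx)
  not_diag := by
    intro e he
    rcases Finset.mem_union.mp he with h | h
    · exact G.not_diag e h
    · exact H.not_diag e h

/-- Vertex-wise and edge-wise intersection of two graphs. -/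
def inter (G H : FinGraph α) : FinGraph α where
  verts := G.verts ∩ H.verts
  edges := G.edges ∩ H.edges
  edge_mem := by
    intro e he x hx
    exact Finset.mem_inter.mpr
      ⟨G.edge_mem e (Finset.mem_inter.mp he).1 x hx,
       H.edge_mem e (Finset.mem_inter.mp he).2 x hx⟩
  not_diag := fun e he => G.not_diag e (Finset.mem_inter.mp he).1

end FinGraph

/-- `D` is a cycle graph of length `n`: its vertices are `n` distinct points
`c 0, …, c (n-1)` and its edges are the consecutive pairs (cyclically). -/
def FinGraph.IsCycleOn {α : Type*} [DecidableEq α] (D : FinGraph α) (n : ℕ) : Prop :=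
  3 ≤ n ∧ ∃ c : ℕ → α, Set.InjOn c (Set.Iio n) ∧
    D.verts = (Finset.range n).image c ∧
    D.edges = (Finset.range n).image (fun i => s(c i, c ((i + 1) % n)))

/-!
Since `G ∩ L = L ∩ D`, inclusion–exclusion for `f` gives
`f(L) - f(L ∩ D) = f(G ∪ L) - f(G) ≥ 6 - 6 = 0`, as `G ∪ L` is a subgraph of the tight glued
graph. On the other hand a cycle of length `n ≥ 3` has `f(D) ≥ 2n ≥ 6`.
-/

namespace FinGraph

variable {α : Type*} [DecidableEq α]

theorem ext {G H : FinGraph α} (hv : G.verts = H.verts) (he : G.edges = H.edges) : G = H := by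
  cases G; cases H; congr

theorem maxwell_union_add_maxwell_inter (G L : FinGraph α) :
    (G.union L).maxwell + (G.inter L).maxwell = G.maxwell + L.maxwell := by
  have hv := Finset.card_union_add_card_inter G.verts L.verts
  have he := Finset.card_union_add_card_inter G.edges L.edges
  simp only [maxwell, union, inter]
  omega

theorem IsSubgraph.union_left {L H : FinGraph α} (hL : L.IsSubgraph H) (G : FinGraph α) :
    (G.union L).IsSubgraph (G.union H) :=
  ⟨Finset.union_subset_union_right hL.1, Finset.union_subset_union_right hL.2⟩

theorem inter_eq_inter_of_inter_eq {G H D L : FinGraph α} (hGH : G.inter H = D)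
    (hL : L.IsSubgraph H) : G.inter L = L.inter D := by
  subst hGH
  apply FinGraph.ext <;> ext x <;> simp only [inter, Finset.mem_inter]
  · have := @hL.1 x; tauto
  · have := @hL.2 x; tauto

theorem IsCycleOn.two_mul_le_maxwell {D : FinGraph α} {n : ℕ} (hD : D.IsCycleOn n) :
    2 * (n : ℤ) ≤ D.maxwell := by
  obtain ⟨-, c, hinj, hverts, hedges⟩ := hD
  have hv : D.verts.card = n := by
    rw [hverts, Finset.card_image_of_injOn (by simpa using hinj), Finset.card_range]
  have he : D.edges.card ≤ n := hedges ▸ Finset.card_image_le.trans (Finset.card_range n).le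
  simp only [maxwell]
  omega

end FinGraph

theorem glued_tight_subgraph_bound_general {α : Type*} [DecidableEq α]
    (G H D : FinGraph α) (n : ℕ)
    (hG : G.Tight)
    (hcyc : D.IsCycleOn n)
    (hGH : G.inter H = D)
    (hglued : (G.union H).Tight) :
    ∀ L : FinGraph α, L.IsSubgraph H → 3 ≤ L.verts.card →
      6 - D.maxwell ≤ L.maxwell - (L.inter D).maxwell := by
  intro L hL hL3
  have hGL : 6 ≤ (G.union L).maxwell :=
    hglued.1 _ (hL.union_left G) (hL3.trans (Finset.card_le_card Finset.subset_union_right))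
  have hmod := G.maxwell_union_add_maxwell_inter L
  rw [FinGraph.inter_eq_inter_of_inter_eq hGH hL, hG.2] at hmod
  have hD := hcyc.two_mul_le_maxwell
  have hn := hcyc.1
  omega

/-- if G is (3,6)-tight and the glued graph G ∪ H is (3,6)-tight,
where G ∩ H is exactly a common cycle D, then every subgraph L of H with at
least 3 vertices satisfies f(L) - f(L ∩ D) ≥ 6 - f(D). -/
theorem glued_tight_subgraph_bound {α : Type*} [DecidableEq α]
    (G H D : FinGraph α) (n : ℕ)
    (hG : G.Tight)
    (hcyc : D.IsCycleOn n)
    (hDG : D.IsSubgraph G) (hDH : D.IsSubgraph H)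
    (hGH : G.inter H = D)
    (hglued : (G.union H).Tight) :
    ∀ L : FinGraph α, L.IsSubgraph H → 3 ≤ L.verts.card →
      6 - D.maxwell ≤ L.maxwell - (L.inter D).maxwell :=
  glued_tight_subgraph_bound_general G H D n hG hcyc hGH hglued
end

section
/- A countable graph G that is the union of an increasing chain G₁ ⊆ G₂ ⊆ ... of finite minimally 3-rigid graphs is minimally 3-rigid: every generic placement of G in ℝ³ is infinitesimally rigid, and removing any edge yields a graph that is not 3-rigid. -/
/-- A point of ℝ³. -/
abbrev Pt : Type := Fin 3 → ℝ

/-- `u` is an infinitesimal flex of the bar-joint framework `(G, p)` in ℝ³. -/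
def IsFlex {V : Type*} (G : SimpleGraph V) (p u : V → Pt) : Prop :=
  ∀ v w : V, G.Adj v w → (∑ i, (u v i - u w i) * (p v i - p w i)) = 0

/-- `u` is a trivial infinitesimal flex of the placement `p`: a combination of an
infinitesimal rotation (skew-symmetric matrix) and an infinitesimal translation. -/
def IsTrivialFlex {V : Type*} (p u : V → Pt) : Prop :=
  ∃ S : Matrix (Fin 3) (Fin 3) ℝ, ∃ t : Pt,
    S.transpose = -S ∧ ∀ v : V, u v = S.mulVec (p v) + t

/-- The framework `(G, p)` is infinitesimally rigid. -/
def InfRigid {V : Type*} (G : SimpleGraph V) (p : V → Pt) : Prop :=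
  ∀ u : V → Pt, IsFlex G p u → IsTrivialFlex p u

/-- The placement `p` is generic: the coordinates of the joints form an
algebraically independent set over ℚ. -/
def Generic {V : Type*} (p : V → Pt) : Prop :=
  AlgebraicIndependent ℚ (fun vi : V × Fin 3 => p vi.1 vi.2)

/-- The graph `G` is 3-rigid: every generic placement in ℝ³ is infinitesimally rigid. -/
def ThreeRigid {V : Type*} (G : SimpleGraph V) : Prop :=
  ∀ p : V → Pt, Generic p → InfRigid G p

/-- The graph `G` is minimally 3-rigid. -/
def MinThreeRigid {V : Type*} (G : SimpleGraph V) : Prop :=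
  ThreeRigid G ∧ ∀ e ∈ G.edgeSet, ¬ ThreeRigid (G.deleteEdges {e})

noncomputable section
open Matrix

def crossS (ω : Pt) : Matrix (Fin 3) (Fin 3) ℝ :=
  Matrix.of ![![0, -ω 2, ω 1], ![ω 2, 0, -ω 0], ![-ω 1, ω 0, 0]]

lemma crossS_transpose (ω : Pt) : (crossS ω)ᵀ = -crossS ω := by
  ext i j
  fin_cases i <;> fin_cases j <;>
    simp [crossS, Matrix.transpose_apply, Matrix.neg_apply]

lemma crossS_zero : crossS (0 : Pt) = 0 := by
  ext i j
  fin_cases i <;> fin_cases j <;> simp [crossS, Matrix.vecHead, Matrix.vecTail]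

lemma exists_crossS {S : Matrix (Fin 3) (Fin 3) ℝ} (hS : Sᵀ = -S) :
    S = crossS ![S 2 1, S 0 2, S 1 0] := by
  have h : ∀ i j : Fin 3, S j i = -S i j := by
    intro i j
    have := congrFun (congrFun hS i) j
    simpa [Matrix.transpose_apply, Matrix.neg_apply] using this
  ext i j
  fin_cases i <;> fin_cases j <;>
    simp [crossS] <;>
    linarith [h 0 0, h 0 1, h 0 2, h 1 0, h 1 1, h 1 2, h 2 0, h 2 1, h 2 2]

lemma skew_quad {S : Matrix (Fin 3) (Fin 3) ℝ} (hS : Sᵀ = -S) (d : Pt) :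
    ∑ i, (S.mulVec d) i * d i = 0 := by
  rw [exists_crossS hS]
  simp [crossS, Matrix.mulVec, dotProduct, Fin.sum_univ_three]
  ring

def Lmat (d e : Pt) : Matrix (Fin 3) (Fin 3) ℝ :=
  Matrix.of ![![0, d 2, -(d 1)], ![-(d 2), 0, d 0], ![0, e 2, -(e 1)]]

lemma Lmat_mulVec (d e ω : Pt) :
    (Lmat d e).mulVec ω =
      ![((crossS ω).mulVec d) 0, ((crossS ω).mulVec d) 1, ((crossS ω).mulVec e) 0] := by
  funext i
  fin_cases i <;>
    simp [Lmat, crossS, Matrix.mulVec, dotProduct, Fin.sum_univ_three] <;> ring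

lemma omega_zero {d e ω : Pt} (hdet : (Lmat d e).det ≠ 0)
    (h0 : ((crossS ω).mulVec d) 0 = 0) (h1 : ((crossS ω).mulVec d) 1 = 0)
    (h2 : ((crossS ω).mulVec e) 0 = 0) : ω = 0 := by
  by_contra h
  apply hdet
  apply Matrix.exists_mulVec_eq_zero_iff.mp
  refine ⟨ω, h, ?_⟩
  rw [Lmat_mulVec]
  funext i
  fin_cases i <;> simp [h0, h1, h2]

lemma Generic.comp' {V W : Type*} {p : V → Pt} (hp : Generic p) (f : W → V)
    (hf : Function.Injective f) : Generic (p ∘ f) := by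
  have hg : Function.Injective (fun wi : W × Fin 3 => (f wi.1, wi.2)) := by
    intro a b h
    simp only [Prod.mk.injEq] at h
    exact Prod.ext (hf h.1) h.2
  exact hp.comp (fun wi : W × Fin 3 => (f wi.1, wi.2)) hg

lemma Generic.aeval_ne_zero_iff {V : Type*} {p : V → Pt} (hp : Generic p)
    (P : MvPolynomial (V × Fin 3) ℚ) :
    MvPolynomial.aeval (fun vi : V × Fin 3 => p vi.1 vi.2) P ≠ 0 ↔ P ≠ 0 := by
  constructor
  · intro h hP0; rw [hP0] at h; simp at h
  · intro hP h
    have hinj := algebraicIndependent_iff_injective_aeval.mp hp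
    exact hP (hinj (by rw [h, map_zero]))

open MvPolynomial in
lemma Generic.detLmat_ne_zero {V : Type*} {p : V → Pt} (hp : Generic p) {v0 v1 v2 : V}
    (h01 : v0 ≠ v1) (h02 : v0 ≠ v2) (h12 : v1 ≠ v2) :
    (Lmat (fun i => p v1 i - p v0 i) (fun i => p v2 i - p v0 i)).det ≠ 0 := by
  set f : V × Fin 3 → ℝ := fun vi => p vi.1 vi.2 with hf
  set DP : Fin 3 → MvPolynomial (V × Fin 3) ℚ := fun i => X (v1, i) - X (v0, i) with hDP
  set EP : Fin 3 → MvPolynomial (V × Fin 3) ℚ := fun i => X (v2, i) - X (v0, i) with hEP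
  set LP : Matrix (Fin 3) (Fin 3) (MvPolynomial (V × Fin 3) ℚ) :=
    Matrix.of ![![0, DP 2, -(DP 1)], ![-(DP 2), 0, DP 0], ![0, EP 2, -(EP 1)]] with hLP
  have hmap : LP.map (aeval f) = Lmat (fun i => p v1 i - p v0 i) (fun i => p v2 i - p v0 i) := by
    ext i j
    fin_cases i <;> fin_cases j <;>
      simp [hLP, hDP, hEP, Lmat, hf, map_sub, aeval_X]
  have hdet : aeval f LP.det
      = (Lmat (fun i => p v1 i - p v0 i) (fun i => p v2 i - p v0 i)).det := by
    have h2 := RingHom.map_det (aeval f).toRingHom LP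
    rw [RingHom.mapMatrix_apply] at h2
    have h3 : ((aeval f).toRingHom : MvPolynomial (V × Fin 3) ℚ →+* ℝ) LP.det = aeval f LP.det := rfl
    rw [h3] at h2
    have h4 : LP.map ((aeval f).toRingHom : MvPolynomial (V × Fin 3) ℚ →+* ℝ) = LP.map (aeval f) := rfl
    rw [h4, hmap] at h2
    exact h2
  rw [← hdet]
  rw [hp.aeval_ne_zero_iff]
  classical
  intro h0
  set σ : V × Fin 3 → ℚ := fun c => if c = (v1, 2) then 1 else if c = (v2, 1) then 1 else 0 with hσ
  have := congrArg (eval σ) h0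
  rw [map_zero] at this
  rw [Matrix.det_fin_three] at this
  simp only [hLP, hDP, hEP, Matrix.of_apply, Matrix.cons_val', Matrix.cons_val_zero,
    Matrix.cons_val_one, Matrix.head_cons, Matrix.empty_val', Matrix.cons_val_fin_one,
    Matrix.head_fin_const, map_sub, map_neg, _root_.map_mul, map_zero, eval_X, Matrix.cons_val_two,
    Matrix.tail_cons] at this
  have h01' : v1 ≠ v0 := h01.symm
  have h12' : v2 ≠ v1 := h12.symm
  have h02' : v2 ≠ v0 := h02.symm
  simp only [map_sub, _root_.map_mul, map_neg, map_zero, MvPolynomial.eval_X, hσ,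
    Prod.mk.injEq] at this
  norm_num [h01, h02, h12, h01', h02', h12', Fin.ext_iff] at this
end

noncomputable section
open Matrix

lemma isFlex_of_trivial {W : Type*} (K : SimpleGraph W) {q u : W → Pt}
    (h : IsTrivialFlex q u) : IsFlex K q u := by
  obtain ⟨S, t, hS, hu⟩ := h
  intro v w _
  have hd : ∀ i, u v i - u w i = (S.mulVec (q v - q w)) i := by
    intro i
    rw [hu v, hu w, Matrix.mulVec_sub]
    simp
  calc ∑ i, (u v i - u w i) * (q v i - q w i)
      = ∑ i, (S.mulVec (q v - q w)) i * ((q v - q w) i) := by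
        refine Finset.sum_congr rfl fun i _ => ?_
        rw [hd i]; simp
    _ = 0 := skew_quad hS _

lemma IsFlex.subF {W : Type*} {K : SimpleGraph W} {q u g : W → Pt}
    (hu : IsFlex K q u) (hg : IsFlex K q g) : IsFlex K q (u - g) := by
  intro v w hvw
  have key : (∑ i, ((u - g) v i - (u - g) w i) * (q v i - q w i))
      = (∑ i, (u v i - u w i) * (q v i - q w i))
        - (∑ i, (g v i - g w i) * (q v i - q w i)) := by
    rw [← Finset.sum_sub_distrib]
    refine Finset.sum_congr rfl fun i _ => ?_
    simp only [Pi.sub_apply]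
    ring
  rw [key, hu v w hvw, hg v w hvw, sub_zero]

lemma IsFlex.addF {W : Type*} {K : SimpleGraph W} {q u g : W → Pt}
    (hu : IsFlex K q u) (hg : IsFlex K q g) : IsFlex K q (u + g) := by
  intro v w hvw
  have key : (∑ i, ((u + g) v i - (u + g) w i) * (q v i - q w i))
      = (∑ i, (u v i - u w i) * (q v i - q w i))
        + (∑ i, (g v i - g w i) * (q v i - q w i)) := by
    rw [← Finset.sum_add_distrib]
    refine Finset.sum_congr rfl fun i _ => ?_
    simp only [Pi.add_apply]
    ring
  rw [key, hu v w hvw, hg v w hvw, add_zero]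

lemma IsFlex.smulF {W : Type*} {K : SimpleGraph W} {q u : W → Pt}
    (hu : IsFlex K q u) (c : ℝ) : IsFlex K q (fun v i => c * u v i) := by
  intro v w hvw
  have key : (∑ i, (c * u v i - c * u w i) * (q v i - q w i))
      = c * ∑ i, (u v i - u w i) * (q v i - q w i) := by
    rw [Finset.mul_sum]
    refine Finset.sum_congr rfl fun i _ => ?_
    ring
  rw [key, hu v w hvw, mul_zero]

lemma IsTrivialFlex.subT {W : Type*} {q u g : W → Pt}
    (hu : IsTrivialFlex q u) (hg : IsTrivialFlex q g) : IsTrivialFlex q (u - g) := by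
  obtain ⟨S, t, hS, hv⟩ := hu
  obtain ⟨S', t', hS', hv'⟩ := hg
  refine ⟨S - S', t - t', ?_, fun v => ?_⟩
  · rw [Matrix.transpose_sub, hS, hS']; abel
  · rw [Pi.sub_apply, hv, hv', Matrix.sub_mulVec]; abel

lemma IsTrivialFlex.smulT {W : Type*} {q u : W → Pt}
    (hu : IsTrivialFlex q u) (c : ℝ) : IsTrivialFlex q (fun v i => c * u v i) := by
  obtain ⟨S, t, hS, hv⟩ := hu
  refine ⟨c • S, fun i => c * t i, ?_, fun v => ?_⟩
  · rw [Matrix.transpose_smul, hS]; simp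
  · funext i
    show c * u v i = ((c • S) *ᵥ q v + fun i => c * t i) i
    rw [hv]
    simp [Matrix.smul_mulVec, Pi.add_apply]
    ring

lemma IsTrivialFlex.of_eq {W : Type*} {q u g : W → Pt}
    (hu : IsTrivialFlex q u) (h : ∀ v, g v = u v) : IsTrivialFlex q g := by
  obtain ⟨S, t, hS, hv⟩ := hu
  exact ⟨S, t, hS, fun v => (h v).trans (hv v)⟩
section Star
open MvPolynomial Matrix

variable {W : Type*} [Fintype W] [DecidableEq W] (K : SimpleGraph W) [DecidableRel K.Adj]
  (v0 v1 v2 : W)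

def pinIdx (v0 v1 v2 : W) : Fin 6 → W × Fin 3 :=
  ![(v0, 0), (v0, 1), (v0, 2), (v1, 0), (v1, 1), (v2, 0)]

def rigP : Matrix ((W × W) ⊕ Fin 6) (W × Fin 3) (MvPolynomial (W × Fin 3) ℚ) :=
  fun r c =>
    match r with
    | Sum.inl (v, w) => if K.Adj v w then
        (X (v, c.2) - X (w, c.2)) * ((if c.1 = v then 1 else 0) - (if c.1 = w then 1 else 0))
        else 0
    | Sum.inr j => if c = pinIdx v0 v1 v2 j then 1 else 0

def rigM (q : W → Pt) : Matrix ((W × W) ⊕ Fin 6) (W × Fin 3) ℝ :=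
  (rigP K v0 v1 v2).map (aeval fun c : W × Fin 3 => q c.1 c.2)

def rigD (q : W → Pt) : ℝ := ((rigM K v0 v1 v2 q)ᵀ * rigM K v0 v1 v2 q).det

lemma rigD_eq_aeval (q : W → Pt) :
    rigD K v0 v1 v2 q
      = aeval (fun c : W × Fin 3 => q c.1 c.2) ((rigP K v0 v1 v2)ᵀ * rigP K v0 v1 v2).det := by
  set f : MvPolynomial (W × Fin 3) ℚ →+* ℝ := (aeval fun c : W × Fin 3 => q c.1 c.2).toRingHom
    with hf
  have h1 : rigM K v0 v1 v2 q = (rigP K v0 v1 v2).map f := rfl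
  have h2 := RingHom.map_det f ((rigP K v0 v1 v2)ᵀ * rigP K v0 v1 v2)
  rw [RingHom.mapMatrix_apply, Matrix.map_mul, Matrix.transpose_map] at h2
  rw [rigD, h1, ← h2]
  rfl

lemma rigM_mulVec_inl (q u : W → Pt) (v w : W) :
    (rigM K v0 v1 v2 q).mulVec (fun c : W × Fin 3 => u c.1 c.2) (Sum.inl (v, w)) =
      if K.Adj v w then ∑ i, (u v i - u w i) * (q v i - q w i) else 0 := by
  simp only [Matrix.mulVec, dotProduct, rigM, rigP, Matrix.map_apply]
  by_cases h : K.Adj v w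
  · simp only [h, if_true, map_sub, _root_.map_mul, aeval_X, apply_ite (aeval fun c : W × Fin 3 => q c.1 c.2),
      _root_.map_one, map_zero]
    rw [Fintype.sum_prod_type]
    have key : ∀ x : W, (∑ i : Fin 3,
        (q v i - q w i) * (((if x = v then (1:ℝ) else 0) - (if x = w then 1 else 0))) * u x i)
        = ((if x = v then (1:ℝ) else 0) - (if x = w then 1 else 0)) * ∑ i, (q v i - q w i) * u x i := by
      intro x; rw [Finset.mul_sum]; refine Finset.sum_congr rfl fun i _ => ?_; ring
    simp_rw [key]
    simp_rw [sub_mul]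
    rw [Finset.sum_sub_distrib]
    simp only [ite_mul, one_mul, zero_mul]
    rw [Finset.sum_ite_eq' Finset.univ v, Finset.sum_ite_eq' Finset.univ w]
    simp only [Finset.mem_univ, if_true]
    rw [← Finset.sum_sub_distrib]
    refine Finset.sum_congr rfl fun i _ => ?_
    ring
  · simp [h]

lemma rigM_mulVec_inr (q u : W → Pt) (j : Fin 6) :
    (rigM K v0 v1 v2 q).mulVec (fun c : W × Fin 3 => u c.1 c.2) (Sum.inr j) =
      u (pinIdx v0 v1 v2 j).1 (pinIdx v0 v1 v2 j).2 := by
  simp only [Matrix.mulVec, dotProduct, rigM, rigP, Matrix.map_apply,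
    apply_ite (aeval fun c : W × Fin 3 => q c.1 c.2), _root_.map_one, map_zero, ite_mul, one_mul, zero_mul]
  rw [Finset.sum_ite_eq' Finset.univ (pinIdx v0 v1 v2 j)]
  simp

lemma rigD_ne_zero_iff (q : W → Pt) :
    rigD K v0 v1 v2 q ≠ 0 ↔
      ∀ u : W → Pt, IsFlex K q u →
        (∀ j : Fin 6, u (pinIdx v0 v1 v2 j).1 (pinIdx v0 v1 v2 j).2 = 0) → u = 0 := by
  set M := rigM K v0 v1 v2 q with hM
  have hker : ∀ vec : W × Fin 3 → ℝ, (Mᵀ * M).mulVec vec = 0 ↔ M.mulVec vec = 0 := by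
    intro vec
    constructor
    · intro h
      have h2 : vec ⬝ᵥ ((Mᵀ * M).mulVec vec) = 0 := by rw [h]; simp
      rw [← Matrix.mulVec_mulVec, Matrix.dotProduct_mulVec, Matrix.vecMul_transpose] at h2
      exact dotProduct_self_eq_zero.mp h2
    · intro h
      rw [← Matrix.mulVec_mulVec, h, Matrix.mulVec_zero]
  have hdet : rigD K v0 v1 v2 q ≠ 0 ↔ ∀ vec, (Mᵀ * M).mulVec vec = 0 → vec = 0 := by
    rw [rigD, ← hM]
    constructor
    · intro hne vec hv
      by_contra hvne
      exact hne (Matrix.exists_mulVec_eq_zero_iff.mp ⟨vec, hvne, hv⟩)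
    · intro hall hdet0
      obtain ⟨vec, hvne, hv⟩ := Matrix.exists_mulVec_eq_zero_iff.mpr hdet0
      exact hvne (hall vec hv)
  rw [hdet]
  constructor
  · intro hall u hu hpin
    have h0 : M.mulVec (fun c : W × Fin 3 => u c.1 c.2) = 0 := by
      funext r
      rcases r with ⟨v, w⟩ | j
      · rw [hM, rigM_mulVec_inl]
        by_cases h : K.Adj v w
        · rw [if_pos h, hu v w h]; rfl
        · rw [if_neg h]; rfl
      · rw [hM, rigM_mulVec_inr]
        exact hpin j
    have := hall _ ((hker _).mpr h0)
    funext v i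
    exact congrFun this (v, i)
  · intro hall vec hvec
    set u : W → Pt := fun v i => vec (v, i) with hu
    have huvec : (fun c : W × Fin 3 => u c.1 c.2) = vec := by
      funext c; rw [hu]
    have h0 : M.mulVec (fun c : W × Fin 3 => u c.1 c.2) = 0 := by rw [huvec]; exact (hker _).mp hvec
    have hflex : IsFlex K q u := by
      intro v w hadj
      have := congrFun h0 (Sum.inl (v, w))
      rw [hM, rigM_mulVec_inl, if_pos hadj] at this
      exact this
    have hpin : ∀ j : Fin 6, u (pinIdx v0 v1 v2 j).1 (pinIdx v0 v1 v2 j).2 = 0 := by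
      intro j
      have := congrFun h0 (Sum.inr j)
      rw [hM, rigM_mulVec_inr] at this
      exact this
    have := hall u hflex hpin
    funext c
    rw [← huvec]
    rw [this]
    rfl
end Star
section Star2
open Matrix

variable {W : Type*} [Fintype W] [DecidableEq W] (K : SimpleGraph W) [DecidableRel K.Adj]

lemma infRigid_iff_rigD {v0 v1 v2 : W} {q : W → Pt} (hq : Generic q)
    (h01 : v0 ≠ v1) (h02 : v0 ≠ v2) (h12 : v1 ≠ v2) :
    InfRigid K q ↔ rigD K v0 v1 v2 q ≠ 0 := by
  have hdetL := hq.detLmat_ne_zero h01 h02 h12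
  rw [rigD_ne_zero_iff]
  constructor
  · intro hR u hu hpin
    obtain ⟨S, t, hS, hval⟩ := hR u hu
    have hp0 : u v0 0 = 0 := hpin 0
    have hp1 : u v0 1 = 0 := hpin 1
    have hp2 : u v0 2 = 0 := hpin 2
    have hp3 : u v1 0 = 0 := hpin 3
    have hp4 : u v1 1 = 0 := hpin 4
    have hp5 : u v2 0 = 0 := hpin 5
    have hu0 : u v0 = 0 := by
      funext i; fin_cases i <;> assumption
    have hSω : S = crossS ![S 2 1, S 0 2, S 1 0] := exists_crossS hS
    set ω : Pt := ![S 2 1, S 0 2, S 1 0] with hω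
    have ht : ∀ i, t i = -(S.mulVec (q v0)) i := by
      intro i
      have h := congrFun (hval v0) i
      rw [hu0] at h
      simp only [Pi.zero_apply, Pi.add_apply] at h
      linarith
    have huv : ∀ x : W, ∀ i, u x i = (crossS ω).mulVec (fun j => q x j - q v0 j) i := by
      intro x i
      have h := congrFun (hval x) i
      rw [h, Pi.add_apply, ht i, hSω]
      have : (fun j => q x j - q v0 j) = q x - q v0 := rfl
      rw [this, Matrix.mulVec_sub]
      simp
      ring
    have hω0 : ω = 0 := by
      refine omega_zero hdetL ?_ ?_ ?_
      · rw [← huv v1 0]; exact hp3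
      · rw [← huv v1 1]; exact hp4
      · rw [← huv v2 0]; exact hp5
    funext x i
    rw [huv x i, hω0, crossS_zero]
    simp
  · intro hker u hu
    obtain ⟨ω, hLω⟩ : ∃ ω : Pt,
        (Lmat (fun i => q v1 i - q v0 i) (fun i => q v2 i - q v0 i)).mulVec ω
          = ![u v1 0 - u v0 0, u v1 1 - u v0 1, u v2 0 - u v0 0] :=
      ⟨(Lmat (fun i => q v1 i - q v0 i) (fun i => q v2 i - q v0 i))⁻¹.mulVec
          ![u v1 0 - u v0 0, u v1 1 - u v0 1, u v2 0 - u v0 0],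
        by rw [Matrix.mulVec_mulVec, Matrix.mul_nonsing_inv _ (isUnit_iff_ne_zero.mpr hdetL),
          Matrix.one_mulVec]⟩
    rw [Lmat_mulVec] at hLω
    have hc0 : ((crossS ω).mulVec (fun i => q v1 i - q v0 i)) 0 = u v1 0 - u v0 0 := by
      have := congrFun hLω 0; simpa using this
    have hc1 : ((crossS ω).mulVec (fun i => q v1 i - q v0 i)) 1 = u v1 1 - u v0 1 := by
      have := congrFun hLω 1; simpa using this
    have hc2 : ((crossS ω).mulVec (fun i => q v2 i - q v0 i)) 0 = u v2 0 - u v0 0 := by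
      have := congrFun hLω 2; simpa using this
    set S := crossS ω with hSdef
    set t : Pt := fun i => u v0 i - S.mulVec (q v0) i with htdef
    have hgtriv : IsTrivialFlex q (fun x => S.mulVec (q x) + t) :=
      ⟨S, t, crossS_transpose ω, fun _ => rfl⟩
    have hgflex := isFlex_of_trivial K hgtriv
    have hdiff : ∀ (x : W) (i : Fin 3), (S.mulVec (q x) + t) i
        = (S.mulVec (fun j => q x j - q v0 j)) i + u v0 i := by
      intro x i
      have hxx : (fun j => q x j - q v0 j) = q x - q v0 := rfl
      rw [hxx, Matrix.mulVec_sub]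
      simp [htdef]
      ring
    have e0 : S.mulVec (fun j => q v0 j - q v0 j) = 0 := by
      have hxx : (fun j => q v0 j - q v0 j) = (0 : Pt) := by funext i; simp
      rw [hxx, Matrix.mulVec_zero]
    have hpin : ∀ j : Fin 6,
        (u - fun x => S.mulVec (q x) + t) (pinIdx v0 v1 v2 j).1 (pinIdx v0 v1 v2 j).2 = 0 := by
      intro j
      fin_cases j
      · show u v0 0 - (S.mulVec (q v0) + t) 0 = 0
        rw [hdiff, e0]; simp
      · show u v0 1 - (S.mulVec (q v0) + t) 1 = 0
        rw [hdiff, e0]; simp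
      · show u v0 2 - (S.mulVec (q v0) + t) 2 = 0
        rw [hdiff, e0]; simp
      · show u v1 0 - (S.mulVec (q v1) + t) 0 = 0
        rw [hdiff, hc0]; ring
      · show u v1 1 - (S.mulVec (q v1) + t) 1 = 0
        rw [hdiff, hc1]; ring
      · show u v2 0 - (S.mulVec (q v2) + t) 0 = 0
        rw [hdiff, hc2]; ring
    have hzero : (u - fun x => S.mulVec (q x) + t) = 0 := hker _ (hu.subF hgflex) hpin
    refine hgtriv.of_eq fun v => ?_
    have h := congrFun hzero v
    have h2 : u v - (fun x => S.mulVec (q x) + t) v = 0 := by simpa using h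
    exact sub_eq_zero.mp h2

lemma infRigid_transfer {v0 v1 v2 : W} {q p : W → Pt} (hq : Generic q) (hp : Generic p)
    (h01 : v0 ≠ v1) (h02 : v0 ≠ v2) (h12 : v1 ≠ v2) :
    InfRigid K q ↔ InfRigid K p := by
  rw [infRigid_iff_rigD K hq h01 h02 h12, infRigid_iff_rigD K hp h01 h02 h12,
    rigD_eq_aeval, rigD_eq_aeval, hq.aeval_ne_zero_iff, hp.aeval_ne_zero_iff]
end Star2
section Transport

lemma threeRigid_of_equiv {V W : Type*} (e : V ≃ W) {G : SimpleGraph V} {H : SimpleGraph W}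
    (hAdj : ∀ a b : V, G.Adj a b ↔ H.Adj (e a) (e b)) (hG : ThreeRigid G) : ThreeRigid H := by
  intro p hp u hu
  have hpe : Generic (p ∘ e) := hp.comp' e e.injective
  have hue : IsFlex G (p ∘ e) (u ∘ e) := fun a b hab => hu (e a) (e b) ((hAdj a b).mp hab)
  obtain ⟨S, t, hS, hval⟩ := hG (p ∘ e) hpe (u ∘ e) hue
  refine ⟨S, t, hS, fun w => ?_⟩
  have := hval (e.symm w)
  simpa [Function.comp] using this

lemma minThreeRigid_of_equiv {V W : Type*} (e : V ≃ W) {G : SimpleGraph V} {H : SimpleGraph W}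
    (hAdj : ∀ a b : V, G.Adj a b ↔ H.Adj (e a) (e b)) (hG : MinThreeRigid G) : MinThreeRigid H := by
  constructor
  · exact threeRigid_of_equiv e hAdj hG.1
  · intro ed hed
    induction ed using Sym2.ind with
    | _ x y =>
      intro hTR
      have hxy : H.Adj x y := hed
      have hGxy : G.Adj (e.symm x) (e.symm y) := by
        rw [hAdj]; simpa using hxy
      refine hG.2 s(e.symm x, e.symm y) hGxy ?_
      refine threeRigid_of_equiv e.symm (fun a b => ?_) hTR
      rw [SimpleGraph.deleteEdges_adj, SimpleGraph.deleteEdges_adj]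
      have hab : H.Adj a b ↔ G.Adj (e.symm a) (e.symm b) := by
        rw [hAdj (e.symm a) (e.symm b)]
        simp
      have hsym : (s(a, b) = s(x, y)) ↔ (s(e.symm a, e.symm b) = s(e.symm x, e.symm y)) := by
        constructor
        · intro h
          have := congrArg (Sym2.map e.symm) h
          simpa [Sym2.map_pair_eq] using this
        · intro h
          have := congrArg (Sym2.map e) h
          simpa [Sym2.map_pair_eq] using this
      constructor
      · rintro ⟨h1, h2⟩
        refine ⟨hab.mp h1, fun hmem => h2 ?_⟩
        simp only [Set.mem_singleton_iff] at hmem ⊢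
        exact hsym.mpr hmem
      · rintro ⟨h1, h2⟩
        refine ⟨hab.mpr h1, fun hmem => h2 ?_⟩
        simp only [Set.mem_singleton_iff] at hmem ⊢
        exact hsym.mp hmem

end Transport

section Existence
open Cardinal

lemma exists_generic (V : Type*) [Countable V] : ∃ p : V → Pt, Generic p := by
  obtain ⟨s, hs⟩ := exists_isTranscendenceBasis ℚ
    ℝ
  have hrange : Set.range (Subtype.val : s → ℝ) = s := Subtype.range_coe
  have hK : ¬ (#s ≤ ℵ₀) := by
    intro hc
    have halg := hs.isAlgebraic
    rw [hrange] at halg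
    haveI := halg
    set K := Algebra.adjoin ℚ (s : Set ℝ) with hKdef
    have hsurj : Function.Surjective
        (fun P : MvPolynomial s ℚ => (⟨MvPolynomial.aeval (Subtype.val : s → ℝ) P, by
          rw [hKdef, Algebra.adjoin_eq_range]; exact ⟨P, rfl⟩⟩ : K)) := by
      rintro ⟨x, hx⟩
      rw [hKdef, Algebra.adjoin_eq_range] at hx
      obtain ⟨P, hP⟩ := hx
      exact ⟨P, Subtype.ext hP⟩
    have hmk : #K ≤ ℵ₀ := by
      refine le_trans (Cardinal.mk_le_of_surjective hsurj) ?_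
      refine le_trans MvPolynomial.cardinalMk_le_max ?_
      exact max_le (max_le Cardinal.mk_le_aleph0 hc) le_rfl
    have hR : #ℝ ≤ ℵ₀ := by
      refine le_trans (Algebra.IsAlgebraic.cardinalMk_le_max K ℝ) ?_
      exact max_le hmk le_rfl
    have : Countable ℝ := Cardinal.mk_le_aleph0_iff.mp hR
    exact Cardinal.not_countable_real (Set.countable_univ_iff.mpr this)
  have hle : (#ℕ : Cardinal) ≤ #s := by
    rw [Cardinal.mk_nat]
    exact le_of_not_ge hK
  obtain ⟨embn⟩ := (Cardinal.le_def _ _).mp hle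
  obtain ⟨f, hf⟩ := exists_injective_nat (V × Fin 3)
  set emb : V × Fin 3 → s := fun c => embn (f c) with hemb
  have hembinj : Function.Injective emb := fun a b h => hf (embn.injective h)
  refine ⟨fun v i => (emb (v, i) : ℝ), ?_⟩
  have h1 : AlgebraicIndependent ℚ ((Subtype.val : s → ℝ) ∘ emb) := hs.1.comp emb hembinj
  have h2 : (fun vi : V × Fin 3 => (emb (vi.1, vi.2) : ℝ)) = (Subtype.val : s → ℝ) ∘ emb := by
    funext vi
    obtain ⟨v, i⟩ := vi
    rfl
  rw [Generic, h2]
  exact h1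
end Existence
section Support

lemma IsTrivialFlex.addT {W : Type*} {q u g : W → Pt}
    (hu : IsTrivialFlex q u) (hg : IsTrivialFlex q g) : IsTrivialFlex q (u + g) := by
  obtain ⟨S, t, hS, hv⟩ := hu
  obtain ⟨S', t', hS', hv'⟩ := hg
  refine ⟨S + S', t + t', ?_, fun v => ?_⟩
  · rw [Matrix.transpose_add, hS, hS']; abel
  · rw [Pi.add_apply, hv, hv', Matrix.add_mulVec]; abel

lemma sum_bracket_symm {W : Type*} (u q : W → Pt) (x y : W) :
    (∑ i, (u x i - u y i) * (q x i - q y i)) = ∑ i, (u y i - u x i) * (q y i - q x i) := by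
  refine Finset.sum_congr rfl fun i _ => ?_
  ring

lemma isFlex_full_of_deleted {W : Type*} {H : SimpleGraph W} {q u : W → Pt} {a b : W}
    (hu : IsFlex (H.deleteEdges {s(a, b)}) q u)
    (hab : (∑ i, (u a i - u b i) * (q a i - q b i)) = 0) : IsFlex H q u := by
  intro v w hvw
  by_cases h : s(v, w) = s(a, b)
  · rw [Sym2.eq_iff] at h
    rcases h with ⟨rfl, rfl⟩ | ⟨rfl, rfl⟩
    · exact hab
    · rw [sum_bracket_symm]; exact hab
  · refine hu v w ?_
    rw [SimpleGraph.deleteEdges_adj]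
    exact ⟨hvw, by simpa using h⟩

lemma exists_nontrivial_flex {W : Type*} [Finite W] (K : SimpleGraph W)
    {x0 x1 x2 : W} (h01 : x0 ≠ x1) (h02 : x0 ≠ x2) (h12 : x1 ≠ x2)
    (hnr : ¬ ThreeRigid K) {p : W → Pt} (hp : Generic p) :
    ∃ u, IsFlex K p u ∧ ¬ IsTrivialFlex p u := by
  classical
  haveI := Fintype.ofFinite W
  rw [ThreeRigid] at hnr
  push_neg at hnr
  obtain ⟨q, hq, hqir⟩ := hnr
  have hnp : ¬ InfRigid K p := by
    rw [← infRigid_transfer K (v0 := x0) (v1 := x1) (v2 := x2) hq hp h01 h02 h12]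
    exact hqir
  rw [InfRigid] at hnp
  push_neg at hnp
  exact hnp

lemma trivial_unique {V : Type*} {p : V → Pt} (hp : Generic p) {x0 x1 x2 : V}
    (h01 : x0 ≠ x1) (h02 : x0 ≠ x2) (h12 : x1 ≠ x2)
    {S S' : Matrix (Fin 3) (Fin 3) ℝ} {t t' : Pt} (hS : Sᵀ = -S) (hS' : S'ᵀ = -S')
    (h0 : S.mulVec (p x0) + t = S'.mulVec (p x0) + t')
    (h1 : S.mulVec (p x1) + t = S'.mulVec (p x1) + t')
    (h2 : S.mulVec (p x2) + t = S'.mulVec (p x2) + t') :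
    S = S' ∧ t = t' := by
  have hDskew : (S - S')ᵀ = -(S - S') := by
    rw [Matrix.transpose_sub, hS, hS']; abel
  have hcross := exists_crossS hDskew
  have key : ∀ y : V, (S.mulVec (p y) + t = S'.mulVec (p y) + t') →
      (S - S').mulVec (fun i => p y i - p x0 i) = 0 := by
    intro y hy
    funext i
    have hxx : (fun i => p y i - p x0 i) = p y - p x0 := rfl
    rw [hxx, Matrix.mulVec_sub, Matrix.sub_mulVec, Matrix.sub_mulVec]
    have e1 := congrFun hy i
    have e0 := congrFun h0 i
    simp only [Pi.add_apply] at e1 e0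
    simp only [Pi.sub_apply, Pi.zero_apply]
    linarith
  have hd1 := key x1 h1
  have hd2 := key x2 h2
  have hω : (![S 2 1 - S' 2 1, S 0 2 - S' 0 2, S 1 0 - S' 1 0] : Pt) = 0 := by
    have hc : ∀ i j, (S - S') i j = S i j - S' i j := fun i j => rfl
    refine omega_zero (hp.detLmat_ne_zero h01 h02 h12) ?_ ?_ ?_
    · rw [show crossS ![S 2 1 - S' 2 1, S 0 2 - S' 0 2, S 1 0 - S' 1 0]
        = S - S' by rw [← hc 2 1, ← hc 0 2, ← hc 1 0]; exact hcross.symm, hd1]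
      rfl
    · rw [show crossS ![S 2 1 - S' 2 1, S 0 2 - S' 0 2, S 1 0 - S' 1 0]
        = S - S' by rw [← hc 2 1, ← hc 0 2, ← hc 1 0]; exact hcross.symm, hd1]
      rfl
    · rw [show crossS ![S 2 1 - S' 2 1, S 0 2 - S' 0 2, S 1 0 - S' 1 0]
        = S - S' by rw [← hc 2 1, ← hc 0 2, ← hc 1 0]; exact hcross.symm, hd2]
      rfl
  have hSS : S = S' := by
    have : S - S' = crossS 0 := by
      rw [← hω]
      have hc : ∀ i j, (S - S') i j = S i j - S' i j := fun i j => rfl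
      rw [← hc 2 1, ← hc 0 2, ← hc 1 0]
      exact hcross
    rw [crossS_zero] at this
    exact sub_eq_zero.mp this
  refine ⟨hSS, ?_⟩
  have := h0
  rw [hSS] at this
  exact add_left_cancel this

lemma deleted_coe_adj {V : Type*} {G : SimpleGraph V} {H : G.Subgraph} {a b : V}
    (ha : a ∈ H.verts) (hb : b ∈ H.verts) (x y : H.verts) :
    (H.coe.deleteEdges {s(⟨a, ha⟩, ⟨b, hb⟩)}).Adj x y ↔
      H.Adj x.val y.val ∧ s(x.val, y.val) ≠ s(a, b) := by
  rw [SimpleGraph.deleteEdges_adj, SimpleGraph.Subgraph.coe_adj]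
  have hiff : s(x, y) = s((⟨a, ha⟩ : H.verts), (⟨b, hb⟩ : H.verts)) ↔ s(x.val, y.val) = s(a, b) := by
    constructor
    · intro h
      have := congrArg (Sym2.map (Subtype.val : H.verts → V)) h
      simpa [Sym2.map_pair_eq] using this
    · intro h
      exact Sym2.map.injective (Subtype.val_injective) (by simpa [Sym2.map_pair_eq] using h)
  constructor
  · rintro ⟨h1, h2⟩
    exact ⟨h1, fun hc => h2 (by simpa using hiff.mpr hc)⟩
  · rintro ⟨h1, h2⟩
    exact ⟨h1, by simp only [Set.mem_singleton_iff]; exact fun hc => h2 (hiff.mp hc)⟩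

end Support
section StepLemma

lemma step_lemma {V : Type*} {G : SimpleGraph V} {Gs Gb : G.Subgraph}
    (hle : Gs ≤ Gb) (hfinb : Gb.verts.Finite)
    {p : V → Pt} (hp : Generic p) {a b : V} (hadjs : Gs.Adj a b)
    {x0 x1 x2 : V} (hx0 : x0 ∈ Gs.verts) (hx1 : x1 ∈ Gs.verts) (hx2 : x2 ∈ Gs.verts)
    (h01 : x0 ≠ x1) (h02 : x0 ≠ x2) (h12 : x1 ≠ x2)
    (hrigs : ThreeRigid Gs.coe) (hrigb : ThreeRigid Gb.coe)
    (hnotmin : ¬ ThreeRigid (Gb.coe.deleteEdges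
      {s(⟨a, hle.1 hadjs.fst_mem⟩, ⟨b, hle.1 hadjs.snd_mem⟩)}))
    {u : ↥Gs.verts → Pt}
    (hu : IsFlex (Gs.coe.deleteEdges {s(⟨a, hadjs.fst_mem⟩, ⟨b, hadjs.snd_mem⟩)})
      (fun x => p x.val) u)
    (hunt : ¬ IsTrivialFlex (fun x : ↥Gs.verts => p x.val) u) :
    ∃ z : ↥Gb.verts → Pt,
      IsFlex (Gb.coe.deleteEdges {s(⟨a, hle.1 hadjs.fst_mem⟩, ⟨b, hle.1 hadjs.snd_mem⟩)})
        (fun y => p y.val) z ∧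
      ¬ IsTrivialFlex (fun y : ↥Gb.verts => p y.val) z ∧
      ∀ x : ↥Gs.verts, z ⟨x.val, hle.1 x.2⟩ = u x := by
  classical
  haveI : Finite ↥Gb.verts := hfinb.to_subtype
  set qs : ↥Gs.verts → Pt := fun x => p x.val with hqs
  set qb : ↥Gb.verts → Pt := fun y => p y.val with hqb
  have hqsg : Generic qs := hp.comp' Subtype.val Subtype.val_injective
  have hqbg : Generic qb := hp.comp' Subtype.val Subtype.val_injective
  set asV : ↥Gs.verts := ⟨a, hadjs.fst_mem⟩ with hasV
  set bsV : ↥Gs.verts := ⟨b, hadjs.snd_mem⟩ with hbsV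
  set abV : ↥Gb.verts := ⟨a, hle.1 hadjs.fst_mem⟩ with habV
  set bbV : ↥Gb.verts := ⟨b, hle.1 hadjs.snd_mem⟩ with hbbV
  set Ks := Gs.coe.deleteEdges {s(asV, bsV)} with hKs
  set Kb := Gb.coe.deleteEdges {s(abV, bbV)} with hKb
  set inc : ↥Gs.verts → ↥Gb.verts := fun x => ⟨x.val, hle.1 x.2⟩ with hinc
  -- pins in the big vertex set
  have hy01 : (⟨x0, hle.1 hx0⟩ : ↥Gb.verts) ≠ ⟨x1, hle.1 hx1⟩ :=
    fun h => h01 (congrArg Subtype.val h)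
  have hy02 : (⟨x0, hle.1 hx0⟩ : ↥Gb.verts) ≠ ⟨x2, hle.1 hx2⟩ :=
    fun h => h02 (congrArg Subtype.val h)
  have hy12 : (⟨x1, hle.1 hx1⟩ : ↥Gb.verts) ≠ ⟨x2, hle.1 hx2⟩ :=
    fun h => h12 (congrArg Subtype.val h)
  -- a nontrivial flex of the deleted big framework
  obtain ⟨w, hwf, hwnt⟩ := exists_nontrivial_flex Kb hy01 hy02 hy12 hnotmin hqbg
  -- restriction of w is a flex of Ks
  have hres : IsFlex Ks qs (fun x => w (inc x)) := by
    intro x y hxy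
    rw [hKs, deleted_coe_adj] at hxy
    have hKbadj : Kb.Adj (inc x) (inc y) := by
      rw [hKb, deleted_coe_adj]
      exact ⟨hle.2 hxy.1, hxy.2⟩
    exact hwf (inc x) (inc y) hKbadj
  -- the restriction of w is nontrivial
  have hresnt : ¬ IsTrivialFlex qs (fun x => w (inc x)) := by
    rintro ⟨S, t, hS, hval⟩
    set wt : ↥Gb.verts → Pt := fun y => S.mulVec (p y.val) + t with hwt
    have hwtriv : IsTrivialFlex qb wt := ⟨S, t, hS, fun _ => rfl⟩
    have hw'flex : IsFlex Kb qb (w - wt) := hwf.subF (isFlex_of_trivial Kb hwtriv)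
    have hza : (w - wt) abV = 0 := by
      have h2 : w abV = S.mulVec (p a) + t := hval asV
      funext i
      rw [Pi.sub_apply, h2]
      simp [hwt, habV]
    have hzb : (w - wt) bbV = 0 := by
      have h2 : w bbV = S.mulVec (p b) + t := hval bsV
      funext i
      rw [Pi.sub_apply, h2]
      simp [hwt, hbbV]
    have hbr : (∑ i, ((w - wt) abV i - (w - wt) bbV i) * (qb abV i - qb bbV i)) = 0 := by
      rw [hza, hzb]
      simp
    have hfull : IsFlex Gb.coe qb (w - wt) := isFlex_full_of_deleted hw'flex hbr
    have htriv : IsTrivialFlex qb (w - wt) := hrigb qb hqbg _ hfull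
    have : IsTrivialFlex qb w := by
      refine (htriv.addT hwtriv).of_eq fun y => ?_
      simp
    exact hwnt this
  -- the bracket functional
  set φs : (↥Gs.verts → Pt) → ℝ :=
    fun X => ∑ i, (X asV i - X bsV i) * (p a i - p b i) with hφs
  have hqsa : ∀ i, qs asV i = p a i := fun i => rfl
  have hqsb : ∀ i, qs bsV i = p b i := fun i => rfl
  have hfull_of : ∀ X : ↥Gs.verts → Pt, IsFlex Ks qs X → φs X = 0 → IsFlex Gs.coe qs X := by
    intro X hX h0
    exact isFlex_full_of_deleted (a := asV) (b := bsV) hX h0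
  have hφw : φs (fun x => w (inc x)) ≠ 0 := by
    intro h0
    exact hresnt (hrigs qs hqsg _ (hfull_of _ hres h0))
  have hφu : φs u ≠ 0 := by
    intro h0
    exact hunt (hrigs qs hqsg _ (hfull_of _ hu h0))
  set c : ℝ := φs u / φs (fun x => w (inc x)) with hc
  have hcne : c ≠ 0 := div_ne_zero hφu hφw
  -- the corrected difference is a flex of the full small graph
  set g : ↥Gs.verts → Pt := u - (fun x i => c * w (inc x) i) with hg
  have hgflex : IsFlex Ks qs g := hu.subF (hres.smulF c)
  have hφg : φs g = 0 := by
    have : φs g = φs u - c * φs (fun x => w (inc x)) := by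
      simp only [hφs, hg, Pi.sub_apply]
      rw [Finset.mul_sum, ← Finset.sum_sub_distrib]
      refine Finset.sum_congr rfl fun i _ => ?_
      ring
    rw [this, hc, div_mul_cancel₀ _ hφw, sub_self]
  obtain ⟨S, t, hS, hval⟩ := hrigs qs hqsg _ (hfull_of _ hgflex hφg)
  -- the extension
  set z : ↥Gb.verts → Pt := (fun y => S.mulVec (p y.val) + t) + (fun y i => c * w y i) with hz
  have hztriv : IsTrivialFlex qb (fun y : ↥Gb.verts => S.mulVec (p y.val) + t) :=
    ⟨S, t, hS, fun _ => rfl⟩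
  refine ⟨z, ?_, ?_, ?_⟩
  · exact (isFlex_of_trivial Kb hztriv).addF (hwf.smulF c)
  · rintro htz
    have h1 : IsTrivialFlex qb (fun y i => c * w y i) := by
      refine ((htz.subT hztriv).of_eq fun y => ?_)
      funext i
      simp only [hz, Pi.sub_apply, Pi.add_apply]
      ring
    have h2 : IsTrivialFlex qb w := by
      refine ((h1.smulT (1/c)).of_eq fun y => ?_)
      funext i
      rw [← mul_assoc, one_div_mul_cancel hcne, one_mul]
    exact hwnt h2
  · intro x
    funext i
    have hvx := congrFun (hval x) i
    simp only [hg, Pi.sub_apply] at hvx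
    have : z ⟨x.val, hle.1 x.2⟩ i = S.mulVec (p x.val) i + t i + c * w (inc x) i := rfl
    rw [this]
    have hq : qs x = p x.val := rfl
    rw [hq] at hvx
    simp only [Pi.add_apply] at hvx
    linarith

end StepLemma

/-- a countable graph that is the union of an increasing chain of
finite minimally 3-rigid graphs is minimally 3-rigid. -/
theorem countable_union_min_rigid {V : Type*} [Countable V]
    (G : SimpleGraph V) (Gn : ℕ → G.Subgraph)
    (hmono : Monotone Gn)
    (hfin : ∀ n, (Gn n).verts.Finite)
    (hunion : (⨆ n, Gn n) = ⊤)
    (hrigid : ∀ n, MinThreeRigid (Gn n).coe) :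
    MinThreeRigid G := by
  classical
  have hverts : ∀ v : V, ∃ n, v ∈ (Gn n).verts := by
    intro v
    have h1 : (⨆ n, Gn n).verts = Set.univ := by rw [hunion, SimpleGraph.Subgraph.verts_top]
    rw [SimpleGraph.Subgraph.verts_iSup] at h1
    have h2 : v ∈ ⋃ n, (Gn n).verts := by rw [h1]; trivial
    exact Set.mem_iUnion.mp h2
  have hadj : ∀ v w : V, G.Adj v w → ∃ n, (Gn n).Adj v w := by
    intro v w h
    have h2 : (⨆ n, Gn n).Adj v w := by
      rw [hunion]
      exact SimpleGraph.Subgraph.top_adj.mpr h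
    exact SimpleGraph.Subgraph.iSup_adj.mp h2
  have hvmono : ∀ {m n : ℕ}, m ≤ n → (Gn m).verts ⊆ (Gn n).verts := fun h => (hmono h).1
  have hamono : ∀ {m n : ℕ}, m ≤ n → ∀ {v w : V}, (Gn m).Adj v w → (Gn n).Adj v w :=
    fun h _ _ ha => (hmono h).2 ha
  cases finite_or_infinite V with
  | inl hfinV =>
    haveI := Fintype.ofFinite V
    set nv : V → ℕ := fun v => (hverts v).choose with hnv
    set ne' : V × V → ℕ := fun vw =>
      if h : G.Adj vw.1 vw.2 then (hadj vw.1 vw.2 h).choose else 0 with hne'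
    set N := max (Finset.univ.sup nv) (Finset.univ.sup ne') with hN
    have hvN : ∀ v : V, v ∈ (Gn N).verts := by
      intro v
      exact hvmono (le_trans (Finset.le_sup (Finset.mem_univ v)) (le_max_left _ _))
        (hverts v).choose_spec
    have haN : ∀ v w : V, G.Adj v w → (Gn N).Adj v w := by
      intro v w h
      have h1 := (hadj v w h).choose_spec
      have h2 : ne' (v, w) = (hadj v w h).choose := by rw [hne']; exact dif_pos h
      refine hamono (le_trans ?_ (le_max_right _ _)) h1
      rw [← h2]
      exact Finset.le_sup (Finset.mem_univ (v, w))
    set eqv : ↥(Gn N).verts ≃ V := Equiv.subtypeUnivEquiv hvN with heqv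
    refine minThreeRigid_of_equiv eqv (fun x y => ?_) (hrigid N)
    have hx : eqv x = x.val := rfl
    have hy : eqv y = y.val := rfl
    rw [hx, hy, SimpleGraph.Subgraph.coe_adj]
    exact ⟨fun h => h.adj_sub, fun h => haN _ _ h⟩
  | inr hinfV =>
    set x0 : V := Infinite.natEmbedding V 0 with hx0d
    set x1 : V := Infinite.natEmbedding V 1 with hx1d
    set x2 : V := Infinite.natEmbedding V 2 with hx2d
    have h01 : x0 ≠ x1 := fun h =>
      absurd ((Infinite.natEmbedding V).injective h) (by norm_num)
    have h02 : x0 ≠ x2 := fun h =>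
      absurd ((Infinite.natEmbedding V).injective h) (by norm_num)
    have h12 : x1 ≠ x2 := fun h =>
      absurd ((Infinite.natEmbedding V).injective h) (by norm_num)
    obtain ⟨k0, hk0⟩ := hverts x0
    obtain ⟨k1, hk1⟩ := hverts x1
    obtain ⟨k2, hk2⟩ := hverts x2
    constructor
    · -- ThreeRigid G
      intro p hp u hu
      set N0 := max k0 (max k1 k2) with hN0
      have hx0N : x0 ∈ (Gn N0).verts := hvmono (le_max_left _ _) hk0
      have hx1N : x1 ∈ (Gn N0).verts :=
        hvmono (le_trans (le_max_left _ _) (le_max_right _ _)) hk1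
      have hx2N : x2 ∈ (Gn N0).verts :=
        hvmono (le_trans (le_max_right _ _) (le_max_right _ _)) hk2
      have key : ∀ m : ℕ, ∃ S : Matrix (Fin 3) (Fin 3) ℝ, ∃ t : Pt, Sᵀ = -S ∧
          ∀ x : V, ∀ _ : x ∈ (Gn m).verts, u x = S.mulVec (p x) + t := by
        intro m
        have hqg : Generic (fun x : ↥(Gn m).verts => p x.val) :=
          hp.comp' Subtype.val Subtype.val_injective
        have hflex : IsFlex (Gn m).coe (fun x : ↥(Gn m).verts => p x.val)
            (fun x => u x.val) := by
          intro x y hxy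
          exact hu x.val y.val hxy.adj_sub
        obtain ⟨S, t, hS, hval⟩ := (hrigid m).1 _ hqg _ hflex
        exact ⟨S, t, hS, fun x hx => hval ⟨x, hx⟩⟩
      obtain ⟨S, t, hS, hvalN⟩ := key N0
      refine ⟨S, t, hS, fun v => ?_⟩
      obtain ⟨nv', hnv'⟩ := hverts v
      set m := max N0 nv' with hm
      obtain ⟨S', t', hS', hval'⟩ := key m
      have hsub : (Gn N0).verts ⊆ (Gn m).verts := hvmono (le_max_left _ _)
      have e0 : S'.mulVec (p x0) + t' = S.mulVec (p x0) + t := by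
        rw [← hval' x0 (hsub hx0N), ← hvalN x0 hx0N]
      have e1 : S'.mulVec (p x1) + t' = S.mulVec (p x1) + t := by
        rw [← hval' x1 (hsub hx1N), ← hvalN x1 hx1N]
      have e2 : S'.mulVec (p x2) + t' = S.mulVec (p x2) + t := by
        rw [← hval' x2 (hsub hx2N), ← hvalN x2 hx2N]
      obtain ⟨hSS, htt⟩ := trivial_unique hp h01 h02 h12 hS' hS e0 e1 e2
      rw [hval' v (hvmono (le_max_right _ _) hnv'), hSS, htt]
    · -- minimality
      intro ed
      induction ed using Sym2.ind with
      | _ a b =>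
      intro hed hTR
      have hGab : G.Adj a b := hed
      obtain ⟨n0, hn0⟩ := hadj a b hGab
      obtain ⟨p, hp⟩ := exists_generic V
      set m0 := max n0 (max k0 (max k1 k2)) with hm0
      have hab0 : (Gn m0).Adj a b := hamono (le_max_left _ _) hn0
      have hx0m : x0 ∈ (Gn m0).verts :=
        hvmono (le_trans (le_max_left _ _) (le_max_right _ _)) hk0
      have hx1m : x1 ∈ (Gn m0).verts :=
        hvmono (le_trans (le_trans (le_max_left _ _) (le_max_right _ _)) (le_max_right _ _)) hk1
      have hx2m : x2 ∈ (Gn m0).verts :=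
        hvmono (le_trans (le_trans (le_max_right _ _) (le_max_right _ _)) (le_max_right _ _)) hk2
      have hlek : ∀ k : ℕ, Gn m0 ≤ Gn (m0 + k) := fun k => hmono (Nat.le_add_right _ _)
      have habk : ∀ k : ℕ, (Gn (m0 + k)).Adj a b := fun k => (hlek k).2 hab0
      set Kk : (k : ℕ) → SimpleGraph ↥(Gn (m0 + k)).verts := fun k =>
        (Gn (m0 + k)).coe.deleteEdges {s(⟨a, (habk k).fst_mem⟩, ⟨b, (habk k).snd_mem⟩)}
        with hKk
      set Good : (k : ℕ) → (↥(Gn (m0 + k)).verts → Pt) → Prop := fun k u =>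
        IsFlex (Kk k) (fun x => p x.val) u ∧
          ¬ IsTrivialFlex (fun x : ↥(Gn (m0 + k)).verts => p x.val) u with hGood
      have hnotmin : ∀ k, ¬ ThreeRigid (Kk k) := by
        intro k
        have hedge : s((⟨a, (habk k).fst_mem⟩ : ↥(Gn (m0 + k)).verts), ⟨b, (habk k).snd_mem⟩)
            ∈ (Gn (m0 + k)).coe.edgeSet := by
          rw [SimpleGraph.mem_edgeSet, SimpleGraph.Subgraph.coe_adj]
          exact habk k
        exact (hrigid (m0 + k)).2 _ hedge
      have hbase : ∃ u, Good 0 u := by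
        haveI : Finite ↥(Gn (m0 + 0)).verts := (hfin (m0 + 0)).to_subtype
        have hy01 : (⟨x0, hx0m⟩ : ↥(Gn (m0 + 0)).verts) ≠ ⟨x1, hx1m⟩ :=
          fun h => h01 (congrArg Subtype.val h)
        have hy02 : (⟨x0, hx0m⟩ : ↥(Gn (m0 + 0)).verts) ≠ ⟨x2, hx2m⟩ :=
          fun h => h02 (congrArg Subtype.val h)
        have hy12 : (⟨x1, hx1m⟩ : ↥(Gn (m0 + 0)).verts) ≠ ⟨x2, hx2m⟩ :=
          fun h => h12 (congrArg Subtype.val h)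
        exact exists_nontrivial_flex (Kk 0) hy01 hy02 hy12 (hnotmin 0)
          (hp.comp' Subtype.val Subtype.val_injective)
      have hstep : ∀ k, ∀ u, Good k u → ∃ z, Good (k + 1) z ∧
          ∀ x : ↥(Gn (m0 + k)).verts,
            z ⟨x.val, (hmono (by omega : m0 + k ≤ m0 + (k + 1))).1 x.2⟩ = u x := by
        intro k u hku
        have hle : Gn (m0 + k) ≤ Gn (m0 + (k + 1)) := hmono (by omega)
        obtain ⟨z, hz1, hz2, hz3⟩ := step_lemma hle (hfin _) hp (habk k)
          (hvmono (Nat.le_add_right m0 k) hx0m) (hvmono (Nat.le_add_right m0 k) hx1m)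
          (hvmono (Nat.le_add_right m0 k) hx2m) h01 h02 h12
          (hrigid (m0 + k)).1 (hrigid (m0 + (k + 1))).1 (hnotmin (k + 1)) hku.1 hku.2
        exact ⟨z, ⟨hz1, hz2⟩, hz3⟩
      set seq : (k : ℕ) → {u : ↥(Gn (m0 + k)).verts → Pt // Good k u} := fun k =>
        Nat.rec ⟨hbase.choose, hbase.choose_spec⟩
          (fun k prev => ⟨(hstep k prev.1 prev.2).choose,
            (hstep k prev.1 prev.2).choose_spec.1⟩) k with hseq
      have hseqsucc : ∀ k (x : ↥(Gn (m0 + k)).verts) (hmem : x.val ∈ (Gn (m0 + (k + 1))).verts),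
          (seq (k + 1)).1 ⟨x.val, hmem⟩ = (seq k).1 x := by
        intro k x hmem
        exact (hstep k (seq k).1 (seq k).2).choose_spec.2 x
      have hcoh : ∀ j k (x : ↥(Gn (m0 + k)).verts) (hmem : x.val ∈ (Gn (m0 + (k + j))).verts),
          (seq (k + j)).1 ⟨x.val, hmem⟩ = (seq k).1 x := by
        intro j
        induction j with
        | zero =>
          intro k x hmem
          exact congrArg (seq k).1 (Subtype.ext rfl)
        | succ j ih =>
          intro k x hmem
          have hmem' : x.val ∈ (Gn (m0 + (k + j))).verts := hvmono (by omega) x.2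
          have e1 : (seq (k + (j + 1))).1 ⟨x.val, hmem⟩ = (seq (k + j)).1 ⟨x.val, hmem'⟩ :=
            hseqsucc (k + j) ⟨x.val, hmem'⟩ hmem
          rw [e1, ih k x hmem']
      have hcoh' : ∀ k k', k ≤ k' → ∀ (x : ↥(Gn (m0 + k)).verts)
          (hmem : x.val ∈ (Gn (m0 + k')).verts),
          (seq k').1 ⟨x.val, hmem⟩ = (seq k).1 x := by
        intro k k' hkk'
        obtain ⟨j, rfl⟩ := Nat.exists_eq_add_of_le hkk'
        exact fun x hmem => hcoh j k x hmem
      set kOf : V → ℕ := fun v => (hverts v).choose with hkOf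
      have hkOfmem : ∀ v : V, v ∈ (Gn (m0 + kOf v)).verts :=
        fun v => hvmono (Nat.le_add_left _ _) (hverts v).choose_spec
      set uG : V → Pt := fun v => (seq (kOf v)).1 ⟨v, hkOfmem v⟩ with huG
      have hres : ∀ k (x : ↥(Gn (m0 + k)).verts), uG x.val = (seq k).1 x := by
        intro k x
        have hmem : x.val ∈ (Gn (m0 + max (kOf x.val) k)).verts := hvmono (by
          have : k ≤ max (kOf x.val) k := le_max_right _ _
          omega) x.2
        have e1 : (seq (max (kOf x.val) k)).1 ⟨x.val, hmem⟩
            = (seq (kOf x.val)).1 ⟨x.val, hkOfmem x.val⟩ :=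
          hcoh' (kOf x.val) (max (kOf x.val) k) (le_max_left _ _) ⟨x.val, hkOfmem x.val⟩ hmem
        have e2 : (seq (max (kOf x.val) k)).1 ⟨x.val, hmem⟩ = (seq k).1 x :=
          hcoh' k (max (kOf x.val) k) (le_max_right _ _) x hmem
        have e3 : uG x.val = (seq (kOf x.val)).1 ⟨x.val, hkOfmem x.val⟩ := rfl
        rw [e3, ← e1, e2]
      have hflexG : IsFlex (G.deleteEdges {s(a, b)}) p uG := by
        intro v w hvw
        rw [SimpleGraph.deleteEdges_adj] at hvw
        obtain ⟨hGvw, hne⟩ := hvw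
        obtain ⟨n1, hn1⟩ := hadj v w hGvw
        set k := max (max (kOf v) (kOf w)) n1 with hk
        have hvk : v ∈ (Gn (m0 + k)).verts := by
          refine hvmono ?_ (hkOfmem v)
          have : kOf v ≤ k := le_trans (le_max_left _ _) (le_max_left _ _)
          omega
        have hwk : w ∈ (Gn (m0 + k)).verts := by
          refine hvmono ?_ (hkOfmem w)
          have : kOf w ≤ k := le_trans (le_max_right _ _) (le_max_left _ _)
          omega
        have hadjk : (Gn (m0 + k)).Adj v w := by
          refine hamono ?_ hn1
          have : n1 ≤ k := le_max_right _ _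
          omega
        have hKadj : (Kk k).Adj ⟨v, hvk⟩ ⟨w, hwk⟩ := by
          rw [hKk]
          rw [deleted_coe_adj]
          refine ⟨hadjk, fun h => hne ?_⟩
          simpa using h
        have hflexk := (seq k).2.1 ⟨v, hvk⟩ ⟨w, hwk⟩ hKadj
        have ev : uG v = (seq k).1 ⟨v, hvk⟩ := hres k ⟨v, hvk⟩
        have ew : uG w = (seq k).1 ⟨w, hwk⟩ := hres k ⟨w, hwk⟩
        rw [ev, ew]
        exact hflexk
      obtain ⟨S, t, hS, hval⟩ := hTR p hp uG hflexG
      refine (seq 0).2.2 ⟨S, t, hS, fun x => ?_⟩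
      have e1 : uG x.val = (seq 0).1 x := hres 0 x
      rw [← e1]
      exact hval x.val
end
end
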